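/- arXiv:2002.03777 — 8 statements merged into one kernel-verified Lean document; each statement's English description precedes it below -/
import Mathlib

section
/- Let k > 0 and B > 0 be real constants. Then there exists a constant D > 0 such that for all natural numbers n ≥ 1: exp(-B·n) · ((n+1)^((k+1)/k) - n^((k+1)/k) + 1) · (1 + (B/2)·n^(-1/k))^(n^((k+1)/k)) ≤ D · exp(-B·n/4). -/
/-!
Since `1 + t ≤ exp t` and `n^(-1/k) · n^((k+1)/k) = n`, the last factor is at most `exp (B n / 2)`.
The middle factor is at most `(n + 1)^((k+1)/k) + 1`, a polynomial in `n`, hence at most a constant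
times `exp (B n / 4)`. The three exponentials then combine to `exp (-B n / 4)`.
-/

open Real

lemma one_add_rpow_le_exp_mul {x y : ℝ} (hx : 0 ≤ x) (hy : 0 ≤ y) :
    (1 + x) ^ y ≤ exp (x * y) :=
  calc (1 + x) ^ y ≤ exp x ^ y := by gcongr; linarith [add_one_le_exp x]
    _ = exp (x * y) := (exp_mul x y).symm

lemma one_add_mul_rpow_rpow_le_exp {a b c x : ℝ} (hab : a + b = 1) (hc : 0 ≤ c) (hx : 0 < x) :
    (1 + c * x ^ a) ^ x ^ b ≤ exp (c * x) :=
  calc (1 + c * x ^ a) ^ x ^ b ≤ exp (c * x ^ a * x ^ b) :=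
        one_add_rpow_le_exp_mul (by positivity) (by positivity)
    _ = exp (c * x) := by rw [mul_assoc, ← rpow_add hx, hab, rpow_one]

lemma exists_rpow_le_mul_exp (α : ℝ) {c : ℝ} (hc : 0 < c) :
    ∃ C > 0, ∀ x : ℝ, 1 ≤ x → x ^ α ≤ C * exp (c * x) := by
  set m := ⌈α⌉₊
  refine ⟨m.factorial / c ^ m, by positivity, fun x hx => ?_⟩
  have hexp : (c * x) ^ m / m.factorial ≤ exp (c * x) :=
    Real.pow_div_factorial_le_exp _ (by positivity) m
  calc x ^ α ≤ x ^ (m : ℝ) := rpow_le_rpow_of_exponent_le hx (Nat.le_ceil α)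
    _ = m.factorial / c ^ m * ((c * x) ^ m / m.factorial) := by
        rw [rpow_natCast, mul_pow]; field_simp
    _ ≤ m.factorial / c ^ m * exp (c * x) := by gcongr

theorem stmt2 (k B : ℝ) (hk : 0 < k) (hB : 0 < B) :
    ∃ D : ℝ, 0 < D ∧ ∀ n : ℕ, 1 ≤ n →
      Real.exp (-B * n) * (((n : ℝ) + 1) ^ ((k + 1) / k) - (n : ℝ) ^ ((k + 1) / k) + 1) *
        (1 + (B / 2) * (n : ℝ) ^ (-(1 : ℝ) / k)) ^ ((n : ℝ) ^ ((k + 1) / k)) ≤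
      D * Real.exp (-B * n / 4) := by
  obtain ⟨C, hC, hpow⟩ := exists_rpow_le_mul_exp ((k + 1) / k) (c := B / 4) (by positivity)
  refine ⟨C * exp (B / 4) + 1, by positivity, fun n hn => ?_⟩
  have hn : (1 : ℝ) ≤ n := by exact_mod_cast hn
  have hlast : (1 + (B / 2) * (n : ℝ) ^ (-(1 : ℝ) / k)) ^ ((n : ℝ) ^ ((k + 1) / k)) ≤
      exp (B / 2 * n) :=
    one_add_mul_rpow_rpow_le_exp (by field_simp; ring) (by positivity) (by positivity)
  have hmiddle : ((n : ℝ) + 1) ^ ((k + 1) / k) - (n : ℝ) ^ ((k + 1) / k) + 1 ≤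
      (C * exp (B / 4) + 1) * exp (B / 4 * n) := by
    have h1 : 1 ≤ exp (B / 4 * n) := one_le_exp (by positivity)
    have h2 := hpow (n + 1) (by linarith)
    rw [mul_add, mul_one, exp_add] at h2
    nlinarith [rpow_nonneg (by positivity : (0 : ℝ) ≤ n) ((k + 1) / k)]
  calc _ ≤ exp (-B * n) * ((C * exp (B / 4) + 1) * exp (B / 4 * n)) * exp (B / 2 * n) := by
        gcongr
    _ = (C * exp (B / 4) + 1) * (exp (-B * n) * exp (B / 4 * n) * exp (B / 2 * n)) := by ring
    _ = (C * exp (B / 4) + 1) * exp (-B * n / 4) := by rw [← exp_add, ← exp_add]; ring_nf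
end

section
/- Let k > 0 and B > 0. There exists a constant D > 0 such that for every natural number l and all complex numbers z, ζ with |z| < 1, 1 < |ζ| < 1 + 2R/3 (for a fixed R > 0) and ζ ≠ z: exp(-B·(|ζ| - 1)^(-k)) · l! / |z - ζ|^(l+1) ≤ D^(l+1) · l^((1 + 1/k)·l). -/
open Real

/-- For `x ≥ 0` and `a > 0`, `exp (-x) * x ^ a ≤ a ^ a`. -/
private lemma exp_neg_mul_rpow_le (x a : ℝ) (hx : 0 ≤ x) (ha : 0 < a) :
    Real.exp (-x) * x ^ a ≤ a ^ a := by
  have h2 : x / a ≤ Real.exp (x / a) := by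
    have := Real.add_one_le_exp (x / a)
    linarith
  have h1 : x ≤ a * Real.exp (x / a) := by
    calc x = a * (x / a) := by field_simp
    _ ≤ a * Real.exp (x / a) := by nlinarith
  have h3 : x ^ a ≤ (a * Real.exp (x / a)) ^ a :=
    Real.rpow_le_rpow hx h1 ha.le
  have h4 : (a * Real.exp (x / a)) ^ a = a ^ a * Real.exp x := by
    rw [Real.mul_rpow ha.le (Real.exp_pos _).le, ← Real.exp_mul]
    congr 1
    field_simp
  calc Real.exp (-x) * x ^ a ≤ Real.exp (-x) * (a ^ a * Real.exp x) := by
        rw [← h4]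
        exact mul_le_mul_of_nonneg_left h3 (Real.exp_pos _).le
    _ = a ^ a * (Real.exp (-x) * Real.exp x) := by ring
    _ = a ^ a := by rw [← Real.exp_add, neg_add_cancel, Real.exp_zero, mul_one]

theorem stmt5 (k B R : ℝ) (hk : 0 < k) (hB : 0 < B) (hR : 0 < R) :
    ∃ D : ℝ, 0 < D ∧ ∀ (l : ℕ) (z ζ : ℂ), ‖z‖ < 1 → 1 < ‖ζ‖ → ‖ζ‖ < 1 + 2 * R / 3 → ζ ≠ z →
      Real.exp (-B * (‖ζ‖ - 1) ^ (-k)) * (Nat.factorial l) / ‖z - ζ‖ ^ (l + 1) ≤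
        D ^ (l + 1) * (l : ℝ) ^ ((1 + 1 / k) * l) := by
  set c : ℝ := max 1 (1 / (k * B)) with hc
  have hc1 : (1 : ℝ) ≤ c := le_max_left _ _
  have hc0 : (0 : ℝ) < c := lt_of_lt_of_le one_pos hc1
  set D : ℝ := c ^ (1/k) * 2 ^ (1/k) * Real.exp (1/k) with hD
  have hD0 : 0 < D := by positivity
  refine ⟨D, hD0, ?_⟩
  intro l z ζ hz hζ1 hζ2 _
  set t : ℝ := ‖ζ‖ - 1 with htdef
  have ht0 : 0 < t := by simp only [htdef]; linarith
  have hs : t ≤ ‖z - ζ‖ := by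
    have h1 : ‖ζ‖ - ‖z‖ ≤ ‖ζ - z‖ := norm_sub_norm_le ζ z
    rw [norm_sub_rev z ζ]
    simp only [htdef]
    linarith
  have hs0 : 0 < ‖z - ζ‖ := lt_of_lt_of_le ht0 hs
  rw [neg_mul]
  set a : ℝ := ((l : ℝ) + 1) / k with ha
  have ha0 : 0 < a := by positivity
  set x : ℝ := B * t ^ (-k) with hx
  have hx0 : 0 < x := mul_pos hB (Real.rpow_pos_of_pos ht0 _)
  set K : ℝ := a ^ a * B ^ (-a) with hK
  have hK0 : 0 < K := mul_pos (Real.rpow_pos_of_pos ha0 _) (Real.rpow_pos_of_pos hB _)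
  -- the power computation: x ^ a = B ^ a / t ^ (l+1)
  have hxa : x ^ a = B ^ a * (t ^ (l + 1))⁻¹ := by
    rw [hx, Real.mul_rpow hB.le (Real.rpow_pos_of_pos ht0 _).le,
      ← Real.rpow_natCast t (l + 1), ← Real.rpow_mul ht0.le, ← Real.rpow_neg ht0.le]
    congr 2
    push_cast
    rw [ha]
    field_simp
  -- key estimate from the auxiliary lemma
  have key : Real.exp (-x) ≤ K * t ^ (l + 1) := by
    have h := exp_neg_mul_rpow_le x a hx0.le ha0
    rw [hxa] at h
    have hpow : (0:ℝ) < t ^ (l + 1) := by positivity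
    have hBa : (0:ℝ) < B ^ a := Real.rpow_pos_of_pos hB _
    rw [hK, Real.rpow_neg hB.le]
    have e1 : (B ^ a * (t ^ (l + 1))⁻¹) * ((B ^ a)⁻¹ * t ^ (l + 1)) = 1 := by
      field_simp
    calc Real.exp (-x)
        = Real.exp (-x) * ((B ^ a * (t ^ (l + 1))⁻¹) * ((B ^ a)⁻¹ * t ^ (l + 1))) := by
          rw [e1, mul_one]
      _ = (Real.exp (-x) * (B ^ a * (t ^ (l + 1))⁻¹)) * ((B ^ a)⁻¹ * t ^ (l + 1)) := by ring
      _ ≤ a ^ a * ((B ^ a)⁻¹ * t ^ (l + 1)) := by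
          apply mul_le_mul_of_nonneg_right h (by positivity)
      _ = a ^ a * (B ^ a)⁻¹ * t ^ (l + 1) := by ring
  have hfact0 : (0:ℝ) ≤ (Nat.factorial l : ℝ) := by positivity
  -- step 1 : bound LHS by K * l!
  have step1 : Real.exp (-x) * (Nat.factorial l) / ‖z - ζ‖ ^ (l + 1) ≤ K * Nat.factorial l := by
    rw [div_le_iff₀ (by positivity)]
    have h1 : t ^ (l + 1) ≤ ‖z - ζ‖ ^ (l + 1) := pow_le_pow_left₀ ht0.le hs _
    calc Real.exp (-x) * (Nat.factorial l : ℝ)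
        ≤ (K * t ^ (l + 1)) * Nat.factorial l := by gcongr
      _ ≤ (K * ‖z - ζ‖ ^ (l + 1)) * Nat.factorial l := by gcongr
      _ = K * Nat.factorial l * ‖z - ζ‖ ^ (l + 1) := by ring
  -- step 2 : bound K * l! by the RHS
  have hKeq : K = (((l:ℝ) + 1) / (k * B)) ^ a := by
    have e : ((l:ℝ) + 1) / (k * B) = a * B⁻¹ := by
      rw [ha]; field_simp
    rw [e, Real.mul_rpow ha0.le (by positivity), Real.inv_rpow hB.le, ← Real.rpow_neg hB.le]
  have step2 : K * Nat.factorial l ≤ D ^ (l + 1) * (l : ℝ) ^ ((1 + 1 / k) * l) := by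
    rcases Nat.eq_zero_or_pos l with hl | hl
    · subst hl
      rw [hKeq, ha]
      norm_num
      have h1 : ((B⁻¹ * k⁻¹ : ℝ)) ^ (k⁻¹) ≤ c ^ (k⁻¹) := by
        apply Real.rpow_le_rpow (by positivity) _ (by positivity)
        rw [hc]
        refine le_max_of_le_right (le_of_eq ?_)
        rw [one_div, mul_inv]
        ring
      have h2 : (1:ℝ) ≤ 2 ^ (1/k) * Real.exp (1/k) := by
        have := Real.one_le_rpow (by norm_num : (1:ℝ) ≤ 2) (by positivity : (0:ℝ) ≤ 1/k)
        have := Real.one_le_exp (by positivity : (0:ℝ) ≤ 1/k)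
        nlinarith
      calc ((B⁻¹ * k⁻¹ : ℝ)) ^ (k⁻¹) ≤ c ^ (k⁻¹) := h1
        _ = c ^ (1/k) * 1 := by rw [mul_one, one_div]
        _ ≤ c ^ (1/k) * (2 ^ (1/k) * Real.exp (1/k)) := by
            exact mul_le_mul_of_nonneg_left h2 (by positivity)
        _ = D := by rw [hD]; ring
    · -- l ≥ 1
      set L : ℝ := (l : ℝ) with hLdef
      have hL1 : (1:ℝ) ≤ L := Nat.one_le_cast.mpr hl
      have hL0 : (0:ℝ) < L := lt_of_lt_of_le one_pos hL1
      have h1 : (L + 1) / (k * B) ≤ c * (2 * L) := by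
        have e1 : (L + 1) / (k * B) = (L + 1) * (1 / (k * B)) := by ring
        have e2 : 1 / (k * B) ≤ c := le_max_right _ _
        have e3 : L + 1 ≤ 2 * L := by linarith
        rw [e1]
        calc (L + 1) * (1 / (k * B)) ≤ (L + 1) * c := by
              apply mul_le_mul_of_nonneg_left e2 (by positivity)
          _ ≤ (2 * L) * c := by
              apply mul_le_mul_of_nonneg_right e3 hc0.le
          _ = c * (2 * L) := by ring
      have h2 : K ≤ c ^ a * 2 ^ a * L ^ a := by
        rw [hKeq]
        calc ((L + 1) / (k * B)) ^ a ≤ (c * (2 * L)) ^ a :=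
              Real.rpow_le_rpow (by positivity) h1 ha0.le
          _ = c ^ a * 2 ^ a * L ^ a := by
              rw [Real.mul_rpow hc0.le (by positivity), Real.mul_rpow (by norm_num) hL0.le]
              ring
      -- rewrite c^a and 2^a as (· ^ (1/k)) ^ (l+1)
      have hca : ∀ u : ℝ, 0 ≤ u → u ^ a = (u ^ (1/k)) ^ (l + 1) := by
        intro u hu
        rw [← Real.rpow_natCast (u ^ (1/k)) (l + 1), ← Real.rpow_mul hu]
        congr 1
        push_cast
        rw [ha]
        ring
      -- L ^ a = L ^ (l/k) * L ^ (1/k)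
      have hLa : L ^ a = L ^ (L / k) * L ^ (1/k) := by
        rw [← Real.rpow_add hL0]
        congr 1
        rw [ha]
        ring
      -- L ^ (1/k) ≤ exp(1/k) ^ (l+1)
      have h3 : L ^ (1/k) ≤ Real.exp (1/k) ^ (l + 1) := by
        have e1 : L ≤ Real.exp (L + 1) := by
          have := Real.add_one_le_exp L
          have := Real.exp_le_exp.mpr (by linarith : L ≤ L + 1)
          linarith
        calc L ^ (1/k) ≤ (Real.exp (L + 1)) ^ (1/k) :=
              Real.rpow_le_rpow hL0.le e1 (by positivity)
          _ = Real.exp ((L + 1) * (1/k)) := (Real.exp_mul _ _).symm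
          _ = Real.exp ((1/k) * ((l + 1 : ℕ) : ℝ)) := by rw [hLdef]; push_cast; ring_nf
          _ = Real.exp (1/k) ^ ((l + 1 : ℕ) : ℝ) := Real.exp_mul _ _
          _ = Real.exp (1/k) ^ (l + 1) := Real.rpow_natCast _ _
      -- l! ≤ L ^ L
      have h4 : (Nat.factorial l : ℝ) ≤ L ^ (L : ℝ) := by
        have := Nat.factorial_le_pow l
        have e1 : (Nat.factorial l : ℝ) ≤ (l : ℝ) ^ (l : ℕ) := by exact_mod_cast this
        rwa [← Real.rpow_natCast (l:ℝ) l] at e1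
      -- RHS rewrite
      have hrhs : L ^ ((1 + 1 / k) * l) = L ^ (L : ℝ) * L ^ (L / k) := by
        rw [← Real.rpow_add hL0]
        congr 1
        rw [hLdef]
        ring
      calc K * Nat.factorial l
          ≤ (c ^ a * 2 ^ a * L ^ a) * (L ^ (L:ℝ)) := by
            apply mul_le_mul h2 h4 hfact0 (by positivity)
        _ = (c ^ (1/k)) ^ (l+1) * (2 ^ (1/k)) ^ (l+1) * (L ^ (L/k) * L ^ (1/k)) * L ^ (L:ℝ) := by
            rw [← hca c hc0.le, ← hca 2 (by norm_num), ← hLa]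
        _ ≤ (c ^ (1/k)) ^ (l+1) * (2 ^ (1/k)) ^ (l+1) * (L ^ (L/k) * Real.exp (1/k) ^ (l+1))
              * L ^ (L:ℝ) := by
            gcongr
        _ = D ^ (l + 1) * (L ^ (L:ℝ) * L ^ (L/k)) := by
            rw [hD, mul_pow, mul_pow]
            ring
        _ = D ^ (l + 1) * L ^ ((1 + 1 / k) * l) := by rw [hrhs]
  exact le_trans step1 step2
end

section
/- Let U be a nonempty open subset of ℂ, N ≥ 1 an integer, and suppose F : U → ℂ is given by F(z) = Σ_{p=0}^{N-1} F_p(z) · (conj z)^p where each F_p : U → ℂ is holomorphic on U. If F is identically zero on U and U is connected, then each F_p is identically zero on U. -/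
/-!
Consider the polarization `Φ(z, ζ) = ∑ F_p(z) ζ^p`, so that `F(z) = Φ(z, conj z)`. For a disc
`B(b, r) ⊆ U`, the function `z ↦ Φ(z, z - b + conj b)` is holomorphic on `B(b, r)` and agrees with `F`
on the horizontal diameter through `b`, where `conj z = z - b + conj b`; by the identity theorem it
vanishes on the whole disc. Centring such discs at `b = z - iy` shows that `ζ ↦ Φ(z, ζ)` vanishes at
`conj z + 2iy` for all small real `y`, so this polynomial in `ζ` has infinitely many roots and all its
coefficients `F_p(z)` vanish.
-/

open Complex ComplexConjugate Metric Filter Topology Finset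

theorem coeff_eq_zero_of_sum_mul_pow_eq_zero {R : Type*} [CommRing R] [IsDomain R] {N : ℕ}
    {a : ℕ → R} {S : Set R} (hS : S.Infinite) (h : ∀ u ∈ S, ∑ p ∈ range N, a p * u ^ p = 0) :
    ∀ p < N, a p = 0 := by
  set P : Polynomial R := ∑ p ∈ range N, Polynomial.C (a p) * Polynomial.X ^ p
  have hP : P = 0 := P.eq_zero_of_infinite_isRoot <| hS.mono fun u hu => by
    simpa [P, Polynomial.eval_finsetSum] using h u hu
  intro p hp
  simpa [P, Polynomial.finsetSum_coeff, Polynomial.coeff_C_mul, Polynomial.coeff_X_pow, hp] using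
    congrArg (Polynomial.coeff · p) hP

theorem eqOn_zero_of_eq_zero_on_horizontal_diameter {g : ℂ → ℂ} {b : ℂ} {r : ℝ} (hr : 0 < r)
    (hg : DifferentiableOn ℂ g (ball b r)) (h : ∀ x : ℝ, |x| < r → g (b + x) = 0) :
    Set.EqOn g 0 (ball b r) := by
  have hline : Tendsto (fun x : ℝ => b + x) (𝓝[≠] 0) (𝓝[≠] b) := by
    refine tendsto_nhdsWithin_iff.mpr ⟨?_, eventually_nhdsWithin_of_forall fun x hx => ?_⟩
    · exact ((continuous_const.add continuous_ofReal).tendsto' 0 b (by simp)).mono_left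
        nhdsWithin_le_nhds
    · simpa using hx
  have hfreq : ∃ᶠ z in 𝓝[≠] b, g z = 0 :=
    hline.frequently <| (eventually_nhdsWithin_of_eventually_nhds
      (eventually_abs_sub_lt 0 hr)).frequently.mono fun x hx => h x (by simpa using hx)
  exact (hg.analyticOnNhd isOpen_ball).eqOn_zero_of_preconnected_of_frequently_eq_zero
    (convex_ball b r).isPreconnected (mem_ball_self hr) hfreq

def polarization (F : ℕ → ℂ → ℂ) (N : ℕ) (z ζ : ℂ) : ℂ :=
  ∑ p ∈ range N, F p z * ζ ^ p

section

variable {U : Set ℂ} {N : ℕ} {F : ℕ → ℂ → ℂ}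

theorem polarization_sub_add_conj_eq_zero_of_ball_subset (hF : ∀ p < N, DifferentiableOn ℂ (F p) U)
    (hzero : ∀ z ∈ U, polarization F N z (conj z) = 0) {b : ℂ} {r : ℝ} (hr : 0 < r)
    (hb : ball b r ⊆ U) : ∀ z ∈ ball b r, polarization F N z (z - b + conj b) = 0 := by
  refine eqOn_zero_of_eq_zero_on_horizontal_diameter hr ?_ fun x hx => ?_
  · refine DifferentiableOn.fun_sum fun p hp => ((hF p (mem_range.mp hp)).mono hb).mul ?_
    exact ((differentiable_id.sub_const b).add_const _).pow p |>.differentiableOn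
  · have hx : b + x ∈ U := hb (by simpa [dist_eq] using hx)
    simpa [add_comm] using hzero _ hx

theorem exists_infinite_polarization_eq_zero (hU : IsOpen U)
    (hF : ∀ p < N, DifferentiableOn ℂ (F p) U)
    (hzero : ∀ z ∈ U, polarization F N z (conj z) = 0) {z : ℂ} (hz : z ∈ U) :
    ∃ S : Set ℂ, S.Infinite ∧ ∀ ζ ∈ S, polarization F N z ζ = 0 := by
  obtain ⟨ε, hε, hball⟩ := Metric.isOpen_iff.mp hU z hz
  refine ⟨(fun y : ℝ => conj z + 2 * y * I) '' Set.Ioo (-(ε / 2)) (ε / 2),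
    (Set.Ioo_infinite (by linarith)).image fun y _ y' _ hyy' => by simpa using hyy', ?_⟩
  rintro _ ⟨y, hy, rfl⟩
  have hy : |y| < ε / 2 := abs_lt.mpr hy
  have hsub : ball (z - y * I) (ε / 2) ⊆ U := (ball_subset_ball' (by
    simp only [dist_eq, sub_sub_cancel_left, norm_neg, norm_mul, norm_real, Real.norm_eq_abs,
      norm_I, mul_one]
    linarith)).trans hball
  have hzmem : z ∈ ball (z - y * I) (ε / 2) := by simpa [dist_eq] using hy
  convert polarization_sub_add_conj_eq_zero_of_ball_subset hF hzero (by linarith) hsub z hzmem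
    using 2
  simp only [map_sub, map_mul, conj_ofReal, conj_I]
  ring

end

theorem stmt7_general (U : Set ℂ) (hU : IsOpen U)
    (N : ℕ) (F : ℕ → ℂ → ℂ)
    (hF : ∀ p < N, DifferentiableOn ℂ (F p) U)
    (hzero : ∀ z ∈ U, ∑ p ∈ Finset.range N, F p z * (starRingEnd ℂ z) ^ p = 0) :
    ∀ p < N, ∀ z ∈ U, F p z = 0 := by
  intro p hp z hz
  obtain ⟨S, hS, hS0⟩ := exists_infinite_polarization_eq_zero hU hF hzero hz
  exact coeff_eq_zero_of_sum_mul_pow_eq_zero (a := (F · z)) hS hS0 p hp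

theorem stmt7 (U : Set ℂ) (hU : IsOpen U) (hUne : U.Nonempty) (hUc : IsConnected U)
    (N : ℕ) (hN : 1 ≤ N) (F : ℕ → ℂ → ℂ)
    (hF : ∀ p < N, DifferentiableOn ℂ (F p) U)
    (hzero : ∀ z ∈ U, ∑ p ∈ Finset.range N, F p z * (starRingEnd ℂ z) ^ p = 0) :
    ∀ p < N, ∀ z ∈ U, F p z = 0 :=
  stmt7_general U hU N F hF hzero
end

section
/- Let k > 0 and let f : D → ℂ be holomorphic on the open unit disk D, with power series f(z) = Σ_{p≥0} a_p z^p. Suppose there is a constant P₀ ≥ 1 such that for all n ∈ ℕ, the n-th complex derivative satisfies sup_{z∈D} |f^(n)(z)| ≤ P₀^(n+1) · n^((1+1/k)·n) (with 0^0 = 1). Then there exist constants P₁, P₂ > 0 such that |a_p| ≤ P₁ · exp(-P₂ · p^(k/(k+1))) for all p ∈ ℕ. -/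
/-!
Cauchy's estimate for `f⁽ʲ⁾` on the unit disk, together with `f⁽ᵖ⁾(0) = p! a_p`, gives
`|a_p| p!/(p-j)! ≤ sup |f⁽ʲ⁾| ≤ P₀^(j+1) j^(θj)` for every `j`, where `θ = 1 + 1/k`.
As `p!/(p-j)! ≥ (p/2)^j` for `j ≤ p/2`, the choice `j = ⌊(p/c)^(1/θ)⌋` with `c = 2eP₀` makes
`P₀ j^θ ≤ p/(2e)`, whence `|a_p| ≤ P₀ e^(-j) ≤ e P₀ exp(-(p/c)^(1/θ))`, and `1/θ = k/(k+1)`.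
-/

open Metric Real
open scoped Topology NNReal Nat

theorem iteratedDeriv_iteratedDeriv {𝕜 : Type*} [NontriviallyNormedField 𝕜] (f : 𝕜 → 𝕜)
    (m n : ℕ) : iteratedDeriv m (iteratedDeriv n f) = iteratedDeriv (m + n) f := by
  simp only [iteratedDeriv_eq_iterate, Function.iterate_add_apply]

theorem Complex.norm_iteratedDeriv_le_of_forall_mem_ball_norm_le {g : ℂ → ℂ} {c : ℂ} {R C : ℝ}
    (hR : 0 < R) (hg : DifferentiableOn ℂ g (ball c R)) (hC : ∀ z ∈ ball c R, ‖g z‖ ≤ C)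
    (m : ℕ) : ‖iteratedDeriv m g c‖ ≤ m ! * C / R ^ m := by
  have hsmall : ∀ r ∈ Set.Ioo 0 R, ‖iteratedDeriv m g c‖ ≤ m ! * C / r ^ m := fun r hr =>
    norm_iteratedDeriv_le_of_forall_mem_sphere_norm_le m hr.1
      (hg.diffContOnCl_ball (closedBall_subset_ball hr.2))
      fun z hz => hC z (sphere_subset_closedBall.trans (closedBall_subset_ball hr.2) hz)
  have hlim : Filter.Tendsto (fun r : ℝ => m ! * C / r ^ m) (𝓝[<] R) (𝓝 (m ! * C / R ^ m)) :=
    ((continuousAt_const.div (continuousAt_pow R m) (pow_ne_zero m hR.ne')).tendsto).mono_left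
      nhdsWithin_le_nhds
  exact ge_of_tendsto hlim (Filter.eventually_of_mem (Ioo_mem_nhdsLT hR) hsmall)

theorem hasFPowerSeriesOnBall_ofScalars_of_hasSum {f : ℂ → ℂ} {a : ℕ → ℂ} {r : ℝ≥0}
    (hr : 0 < r) (hsum : ∀ z ∈ ball (0 : ℂ) r, HasSum (fun p => a p * z ^ p) (f z)) :
    HasFPowerSeriesOnBall f (FormalMultilinearSeries.ofScalars ℂ a) 0 r where
  r_le := by
    refine ENNReal.le_of_forall_nnreal_lt fun s hs => ?_
    have hs' : ((s : ℝ) : ℂ) ∈ ball (0 : ℂ) r := by simpa using (show (s : ℝ) < r from mod_cast hs)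
    refine FormalMultilinearSeries.le_radius_of_tendsto _ (l := 0) ?_
    simpa [FormalMultilinearSeries.ofScalars_norm] using
      (hsum _ hs').summable.tendsto_atTop_zero.norm
  r_pos := by simpa using hr
  hasSum {y} hy := by
    rw [Metric.eball_coe] at hy
    simpa [FormalMultilinearSeries.ofScalars_apply_eq, mul_comm] using hsum y (by simpa using hy)

theorem iteratedDeriv_eq_factorial_mul_of_hasSum {f : ℂ → ℂ} {a : ℕ → ℂ} {r : ℝ}
    (hr : 0 < r) (hsum : ∀ z ∈ ball (0 : ℂ) r, HasSum (fun p => a p * z ^ p) (f z)) (p : ℕ) :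
    iteratedDeriv p f 0 = p ! * a p := by
  lift r to ℝ≥0 using hr.le
  have h := (hasFPowerSeriesOnBall_ofScalars_of_hasSum (mod_cast hr) hsum).factorial_smul 1 p
  rw [nsmul_eq_mul, FormalMultilinearSeries.ofScalars_apply_eq,
    ← iteratedDeriv_eq_iteratedFDeriv] at h
  simpa using h.symm

theorem norm_coeff_mul_descFactorial_mul_pow_le {f : ℂ → ℂ} {a : ℕ → ℂ} {r : ℝ} (hr : 0 < r)
    (hf : DifferentiableOn ℂ f (ball 0 r))
    (hsum : ∀ z ∈ ball (0 : ℂ) r, HasSum (fun p => a p * z ^ p) (f z)) {j : ℕ} {M : ℝ}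
    (hM : ∀ z ∈ ball (0 : ℂ) r, ‖iteratedDeriv j f z‖ ≤ M) (p : ℕ) :
    ‖a p‖ * p.descFactorial j * r ^ (p - j) ≤ M := by
  rcases lt_or_ge p j with hpj | hjp
  · rw [Nat.descFactorial_eq_zero_iff_lt.mpr hpj]
    simpa using (norm_nonneg _).trans (hM 0 (mem_ball_self hr))
  have hderiv : DifferentiableOn ℂ (iteratedDeriv j f) (ball 0 r) := by
    rw [iteratedDeriv_eq_iterate]
    exact ((hf.analyticOnNhd isOpen_ball).iterated_deriv j).differentiableOn
  have hcauchy := Complex.norm_iteratedDeriv_le_of_forall_mem_ball_norm_le hr hderiv hM (p - j)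
  rw [iteratedDeriv_iteratedDeriv, Nat.sub_add_cancel hjp,
    iteratedDeriv_eq_factorial_mul_of_hasSum hr hsum, ← Nat.factorial_mul_descFactorial hjp,
    le_div_iff₀ (by positivity)] at hcauchy
  rw [← mul_le_mul_iff_of_pos_left (show (0 : ℝ) < (p - j)! by positivity)]
  simpa [norm_mul, mul_comm, mul_left_comm, mul_assoc] using hcauchy

theorem half_pow_le_descFactorial {n p : ℕ} (h : (n : ℝ) ≤ p / 2) :
    ((p : ℝ) / 2) ^ n ≤ p.descFactorial n := by
  have hnp : n ≤ p + 1 := by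
    have : (n : ℝ) ≤ p + 1 := by linarith [p.cast_nonneg (α := ℝ)]
    exact_mod_cast this
  calc ((p : ℝ) / 2) ^ n ≤ ((p + 1 - n : ℕ) : ℝ) ^ n := by
        push_cast [Nat.cast_sub hnp]
        exact pow_le_pow_left₀ (by positivity) (by linarith) n
    _ ≤ p.descFactorial n := mod_cast Nat.pow_sub_le_descFactorial p n

theorem natCast_le_rpow_of_one_le (n : ℕ) {θ : ℝ} (hθ : 1 ≤ θ) : (n : ℝ) ≤ (n : ℝ) ^ θ := by
  rcases n.eq_zero_or_pos with rfl | hn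
  · simpa using Real.rpow_nonneg le_rfl θ
  · exact Real.self_le_rpow_of_one_le (mod_cast hn) hθ

theorem le_mul_exp_neg_of_mul_descFactorial_le {A P θ : ℝ} (hA : 0 ≤ A) (hP : 1 ≤ P)
    (hθ : 1 ≤ θ) {n p : ℕ} (hnp : 2 * exp 1 * P * (n : ℝ) ^ θ ≤ p)
    (h : A * p.descFactorial n ≤ P ^ (n + 1) * (n : ℝ) ^ (θ * n)) :
    A ≤ P * exp (-n) := by
  have hPe : 1 ≤ exp 1 * P := one_le_mul_of_one_le_of_one_le (one_le_exp zero_le_one) hP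
  have hn : (n : ℝ) ≤ p / 2 := by nlinarith [natCast_le_rpow_of_one_le n hθ]
  have hPn : P * (n : ℝ) ^ θ ≤ p / 2 * (exp 1)⁻¹ := by
    rw [← div_eq_mul_inv, le_div_iff₀ (exp_pos 1)]
    linarith
  have hpos : 0 < ((p : ℝ) / 2) ^ n := by
    rcases n.eq_zero_or_pos with rfl | hn0
    · simp
    · exact pow_pos (by linarith [(show (1 : ℝ) ≤ n from mod_cast hn0)]) n
  refine le_of_mul_le_mul_right ?_ hpos
  calc A * ((p : ℝ) / 2) ^ n ≤ A * p.descFactorial n :=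
        mul_le_mul_of_nonneg_left (half_pow_le_descFactorial hn) hA
    _ ≤ P ^ (n + 1) * (n : ℝ) ^ (θ * n) := h
    _ = P * (P * (n : ℝ) ^ θ) ^ n := by
        rw [Real.rpow_mul_natCast (Nat.cast_nonneg n), mul_pow, pow_succ]; ring
    _ ≤ P * (p / 2 * (exp 1)⁻¹) ^ n := by gcongr
    _ = P * exp (-n) * ((p : ℝ) / 2) ^ n := by
        rw [mul_pow, ← exp_neg, ← exp_nat_mul]; ring_nf

theorem le_mul_exp_neg_rpow_of_forall_mul_descFactorial_le {A P θ : ℝ} (hA : 0 ≤ A)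
    (hP : 1 ≤ P) (hθ : 1 ≤ θ) {p : ℕ}
    (h : ∀ n : ℕ, A * p.descFactorial n ≤ P ^ (n + 1) * (n : ℝ) ^ (θ * n)) :
    A ≤ exp 1 * P * exp (-(2 * exp 1 * P) ^ (-θ⁻¹) * p ^ θ⁻¹) := by
  set c := 2 * exp 1 * P
  have hc : 0 < c := by positivity
  set x := ((p : ℝ) / c) ^ θ⁻¹
  have hx : 0 ≤ x := by positivity
  set n := ⌊x⌋₊
  have hnθ : (n : ℝ) ^ θ ≤ p / c := calc
    (n : ℝ) ^ θ ≤ x ^ θ := by gcongr; exact Nat.floor_le hx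
    _ = p / c := by rw [← Real.rpow_mul (by positivity), inv_mul_cancel₀ (by positivity),
      Real.rpow_one]
  have hx_eq : c ^ (-θ⁻¹) * p ^ θ⁻¹ = x := by
    simp only [x]
    rw [Real.div_rpow (Nat.cast_nonneg p) hc.le, Real.rpow_neg hc.le]; ring
  calc A ≤ P * exp (-n) :=
        le_mul_exp_neg_of_mul_descFactorial_le hA hP hθ ((le_div_iff₀' hc).mp hnθ) (h n)
    _ ≤ P * exp (1 - x) := by gcongr; linarith [Nat.lt_floor_add_one x]
    _ = exp 1 * P * exp (-c ^ (-θ⁻¹) * p ^ θ⁻¹) := by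
        rw [neg_mul, hx_eq, sub_eq_add_neg, exp_add]; ring

theorem stmt11 (k : ℝ) (hk : 0 < k) (f : ℂ → ℂ) (a : ℕ → ℂ)
    (hf : DifferentiableOn ℂ f (Metric.ball (0 : ℂ) 1))
    (hsum : ∀ z ∈ Metric.ball (0 : ℂ) 1, HasSum (fun p : ℕ => a p * z ^ p) (f z))
    (P₀ : ℝ) (hP₀ : 1 ≤ P₀)
    (hder : ∀ n : ℕ, ∀ z ∈ Metric.ball (0 : ℂ) 1,
      ‖iteratedDerivWithin n f (Metric.ball (0 : ℂ) 1) z‖ ≤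
        P₀ ^ (n + 1) * (n : ℝ) ^ ((1 + 1 / k) * n)) :
    ∃ P₁ P₂ : ℝ, 0 < P₁ ∧ 0 < P₂ ∧
      ∀ p : ℕ, ‖a p‖ ≤ P₁ * Real.exp (-P₂ * (p : ℝ) ^ (k / (k + 1))) := by
  have hθ : 1 ≤ 1 + 1 / k := by have := one_div_pos.mpr hk; linarith
  have hκ : (1 + 1 / k)⁻¹ = k / (k + 1) := by field_simp
  refine ⟨exp 1 * P₀, (2 * exp 1 * P₀) ^ (-(k / (k + 1))), by positivity, by positivity,
    fun p => ?_⟩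
  have hcoeff (n : ℕ) :
      ‖a p‖ * p.descFactorial n ≤ P₀ ^ (n + 1) * (n : ℝ) ^ ((1 + 1 / k) * n) := by
    have hM : ∀ z ∈ ball (0 : ℂ) 1, ‖iteratedDeriv n f z‖ ≤
        P₀ ^ (n + 1) * (n : ℝ) ^ ((1 + 1 / k) * n) := fun z hz => by
      simpa [iteratedDerivWithin_of_isOpen isOpen_ball hz] using hder n z hz
    simpa using norm_coeff_mul_descFactorial_mul_pow_le one_pos hf hsum hM p
  have h := le_mul_exp_neg_rpow_of_forall_mul_descFactorial_le (norm_nonneg _) hP₀ hθ hcoeff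
  rwa [hκ] at h
end

section
/- Let k > 0 and let (a_p)_{p≥0} be a sequence of complex numbers satisfying |a_p| ≤ P₁·exp(-P₂·p^(k/(k+1))) for constants P₁, P₂ > 0. For n ≥ 1 define the polynomial P_n(z) := Σ over integers p with 2^(-(k+1)/k)·n^((k+1)/k) ≤ p < 2^(-(k+1)/k)·(n+1)^((k+1)/k) of a_p·z^p. Then there exist constants C > 0 and 0 < δ < 1 such that for all n ≥ 1: sup over |z| ≤ 1 + (P₂/4)·n^(-1/k) of |P_n(z)| ≤ C·δ^n. -/
open Complex Real

/-!
Write `s = (k + 1) / k`. The `p`-window defining `P_n` lies in `[(n / 2) ^ s, n ^ s)`: on it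
`p ^ (1 / s) ≥ n / 2`, so `|a_p| ≤ P₁ e^{-P₂ n / 2}`, while `p · n ^ (-1 / k) ≤ n ^ (s - 1 / k) = n`,
so `|z ^ p| ≤ (1 + P₂ n ^ (-1 / k) / 4) ^ p ≤ e^{P₂ n / 4}`. Each term is thus at most
`P₁ e^{-P₂ n / 4}`, and the at most `⌈n ^ s⌉` terms cost only a factor `O(e^{P₂ n / 8})`.
-/

/-- The `p`-th term of `P_n(z)`. -/
noncomputable def windowTerm (k : ℝ) (a : ℕ → ℂ) (n : ℝ) (z : ℂ) (p : ℕ) : ℂ :=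
  if (2 : ℝ) ^ (-((k + 1) / k)) * n ^ ((k + 1) / k) ≤ (p : ℝ) ∧
      (p : ℝ) < (2 : ℝ) ^ (-((k + 1) / k)) * (n + 1) ^ ((k + 1) / k)
    then a p * z ^ p else 0

theorem norm_tsum_le_mul_of_eq_zero {E : Type*} [NormedAddCommGroup E] {f : ℕ → E} {N : ℕ}
    {M : ℝ} (hf : ∀ p, N ≤ p → f p = 0) (hM : ∀ p, ‖f p‖ ≤ M) : ‖∑' p, f p‖ ≤ N * M := by
  rw [tsum_eq_sum (s := Finset.range N) fun p hp => hf p (by simpa using hp)]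
  simpa using norm_sum_le_of_le (Finset.range N) fun p _ => hM p

theorem rpow_le_exp_mul_exp {x s ε : ℝ} (hx : 0 < x) (hs : 0 < s) (hε : 0 < ε) :
    x ^ s ≤ Real.exp (s * (Real.log (s / ε) - 1)) * Real.exp (ε * x) := by
  have h := Real.log_le_sub_one_of_pos (show 0 < ε * x / s by positivity)
  rw [Real.log_div (by positivity) hs.ne', Real.log_mul hε.ne' hx.ne'] at h
  rw [rpow_def_of_pos hx, ← Real.exp_add, Real.exp_le_exp, Real.log_div hs.ne' hε.ne']
  have hεx : s * (ε * x / s) = ε * x := mul_div_cancel₀ _ hs.ne'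
  linarith [mul_le_mul_of_nonneg_left h hs.le]

theorem natCeil_rpow_le_mul_exp {x s ε : ℝ} (hx : 0 < x) (hs : 0 < s) (hε : 0 < ε) :
    (⌈x ^ s⌉₊ : ℝ) ≤ (Real.exp (s * (Real.log (s / ε) - 1)) + 1) * Real.exp (ε * x) := by
  have hceil := Nat.ceil_lt_add_one (rpow_nonneg hx.le s)
  have hexp : 1 ≤ Real.exp (ε * x) := one_le_exp (by positivity)
  nlinarith [rpow_le_exp_mul_exp hx hs hε, exp_pos (s * (Real.log (s / ε) - 1))]

theorem two_rpow_neg_mul_add_one_rpow_le {n s : ℝ} (hn : 1 ≤ n) (hs : 0 ≤ s) :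
    (2 : ℝ) ^ (-s) * (n + 1) ^ s ≤ n ^ s := by
  rw [rpow_neg zero_le_two, ← inv_rpow zero_le_two, ← mul_rpow (by norm_num) (by linarith)]
  exact rpow_le_rpow (by positivity) (by linarith) hs

theorem half_le_rpow_inv_of_two_rpow_neg_mul_le {n x s : ℝ} (hn : 0 ≤ n) (hx : 0 ≤ x)
    (hs : 0 < s) (h : (2 : ℝ) ^ (-s) * n ^ s ≤ x) : n / 2 ≤ x ^ s⁻¹ := by
  rwa [le_rpow_inv_iff_of_pos (by positivity) hx hs, div_rpow hn zero_le_two, div_eq_inv_mul,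
    ← rpow_neg zero_le_two]

theorem norm_pow_le_exp_mul {𝕜 : Type*} [NormedDivisionRing 𝕜] {z : 𝕜} {t : ℝ}
    (hz : ‖z‖ ≤ 1 + t) (p : ℕ) : ‖z ^ p‖ ≤ Real.exp (p * t) := by
  rw [norm_pow, Real.exp_nat_mul]
  exact pow_le_pow_left₀ (norm_nonneg z) (hz.trans (by linarith [add_one_le_exp t])) p

section windowTerm

variable {k : ℝ} {a : ℕ → ℂ} {n : ℝ} {z : ℂ}

theorem windowTerm_eq_zero (hk : 0 < k) (hn : 1 ≤ n) {p : ℕ} (hp : ⌈n ^ ((k + 1) / k)⌉₊ ≤ p) :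
    windowTerm k a n z p = 0 := by
  refine if_neg fun ⟨_, hlt⟩ => ?_
  have := hlt.trans_le (two_rpow_neg_mul_add_one_rpow_le hn (by positivity))
  exact (Nat.ceil_le.1 hp).not_gt this

theorem norm_windowTerm_le (hk : 0 < k) {P₁ P₂ : ℝ} (hP₁ : 0 ≤ P₁) (hP₂ : 0 ≤ P₂)
    (ha : ∀ p : ℕ, ‖a p‖ ≤ P₁ * Real.exp (-P₂ * (p : ℝ) ^ (k / (k + 1)))) (hn : 1 ≤ n)
    (hz : ‖z‖ ≤ 1 + (P₂ / 4) * n ^ (-(1 : ℝ) / k)) (p : ℕ) :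
    ‖windowTerm k a n z p‖ ≤ P₁ * Real.exp (-(P₂ * n / 4)) := by
  unfold windowTerm
  split_ifs with hp
  · obtain ⟨hlow, hup⟩ := hp
    have hcoeff : ‖a p‖ ≤ P₁ * Real.exp (-(P₂ * n / 2)) := by
      have := half_le_rpow_inv_of_two_rpow_neg_mul_le (by linarith) p.cast_nonneg
        (by positivity) hlow
      rw [inv_div] at this
      exact (ha p).trans (by gcongr; nlinarith)
    have hpow : ‖z ^ p‖ ≤ Real.exp (P₂ * n / 4) := by
      refine (norm_pow_le_exp_mul hz p).trans (Real.exp_le_exp.2 ?_)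
      have hp_lt := hup.trans_le (two_rpow_neg_mul_add_one_rpow_le hn (by positivity))
      have hrpow : n ^ ((k + 1) / k) * n ^ (-(1 : ℝ) / k) = n := by
        rw [← rpow_add (by linarith), show (k + 1) / k + -1 / k = 1 by field_simp; ring, rpow_one]
      have : (p : ℝ) * n ^ (-(1 : ℝ) / k) ≤ n :=
        (mul_le_mul_of_nonneg_right hp_lt.le (by positivity)).trans_eq hrpow
      nlinarith
    calc ‖a p * z ^ p‖ = ‖a p‖ * ‖z ^ p‖ := norm_mul _ _
      _ ≤ P₁ * Real.exp (-(P₂ * n / 2)) * Real.exp (P₂ * n / 4) := by gcongr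
      _ = P₁ * Real.exp (-(P₂ * n / 4)) := by rw [mul_assoc, ← Real.exp_add]; ring_nf
  · rw [norm_zero]; positivity

end windowTerm

theorem stmt12 (k : ℝ) (hk : 0 < k) (a : ℕ → ℂ) (P₁ P₂ : ℝ) (hP₁ : 0 < P₁) (hP₂ : 0 < P₂)
    (ha : ∀ p : ℕ, ‖a p‖ ≤ P₁ * Real.exp (-P₂ * (p : ℝ) ^ (k / (k + 1)))) :
    ∃ C δ : ℝ, 0 < C ∧ 0 < δ ∧ δ < 1 ∧
      ∀ n : ℕ, 1 ≤ n → ∀ z : ℂ, ‖z‖ ≤ 1 + (P₂ / 4) * (n : ℝ) ^ (-(1 : ℝ) / k) →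
        ‖∑' p : ℕ, (if (2 : ℝ) ^ (-((k + 1) / k)) * (n : ℝ) ^ ((k + 1) / k) ≤ (p : ℝ) ∧
              (p : ℝ) < (2 : ℝ) ^ (-((k + 1) / k)) * ((n : ℝ) + 1) ^ ((k + 1) / k)
            then a p * z ^ p else 0)‖ ≤ C * δ ^ n := by
  set s := (k + 1) / k
  set B := Real.exp (s * (Real.log (s / (P₂ / 8)) - 1))
  refine ⟨P₁ * (B + 1), Real.exp (-(P₂ / 8)), by positivity, exp_pos _,
    exp_lt_one_iff.2 (by linarith), fun n hn z hz => ?_⟩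
  have hn1 : (1 : ℝ) ≤ n := by exact_mod_cast hn
  have hN := natCeil_rpow_le_mul_exp (x := n) (s := s) (by linarith) (by positivity)
    (by positivity : 0 < P₂ / 8)
  calc ‖∑' p, windowTerm k a n z p‖
      ≤ ⌈(n : ℝ) ^ s⌉₊ * (P₁ * Real.exp (-(P₂ * n / 4))) :=
        norm_tsum_le_mul_of_eq_zero (fun p => windowTerm_eq_zero hk hn1)
          (norm_windowTerm_le hk hP₁.le hP₂.le ha hn1 hz)
    _ ≤ (B + 1) * Real.exp (P₂ / 8 * n) * (P₁ * Real.exp (-(P₂ * n / 4))) := by gcongr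
    _ = P₁ * (B + 1) * Real.exp (-(P₂ / 8)) ^ n := by
        rw [← Real.exp_nat_mul, mul_mul_mul_comm, ← Real.exp_add]; ring_nf
end

section
/- Let k > 0, B > 0 and N ∈ ℕ. Then as n → ∞: exp(-B·n) · Σ over integers j with n^((k+1)/k) ≤ j < (n+1)^((k+1)/k) of (1 + exp(B·(j^(k/(k+1)) - (j-1)^(k/(k+1))))) · (1 + (B/3)·n^(-1/k))^(j+N) = O(exp(-B·n/4)). -/
/-!
With `c = (k+1)/k`, `d = k/(k+1) ≤ 1` and `aₙ = (B/3) n^(-1/k)`, the sum has at most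
`(n+1)^c + 1` nonzero terms. Since `j^d - (j-1)^d ≤ 1` and `(1 + a)^m ≤ exp (a m)`, each term is at
most `(1 + e^B) exp (aₙ ((n+1)^c + N))`, and `n^(-1/k) (n+1)^c ~ n` makes this exponent eventually
at most `Bn/2 + BN/3`. The expression is therefore `O(n^c e^(-Bn/2)) = O(e^(-Bn/4))`.
-/

open Real Asymptotics Filter Topology

lemma tsum_ite_le_mul {p : ℕ → Prop} [DecidablePred p] {f : ℕ → ℝ} {y T : ℝ} (hy : 0 ≤ y)
    (hT : 0 ≤ T) (hp : ∀ j, p j → (j : ℝ) < y) (hf : ∀ j, p j → f j ≤ T) :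
    ∑' j, (if p j then f j else 0) ≤ (y + 1) * T := by
  have hsupp : ∀ j ∉ Finset.range ⌈y⌉₊, (if p j then f j else 0) = 0 := fun j hj => by
    refine if_neg fun hpj => hj (Finset.mem_range.mpr ?_)
    exact_mod_cast (hp j hpj).trans_le (Nat.le_ceil y)
  have hle : ∀ j ∈ Finset.range ⌈y⌉₊, (if p j then f j else 0) ≤ T := fun j _ => by
    split_ifs with hpj
    exacts [hf j hpj, hT]
  calc ∑' j, (if p j then f j else 0)
      = ∑ j ∈ Finset.range ⌈y⌉₊, (if p j then f j else 0) := tsum_eq_sum hsupp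
    _ ≤ ⌈y⌉₊ * T := by simpa using Finset.sum_le_card_nsmul _ _ _ hle
    _ ≤ (y + 1) * T := by gcongr; exact (Nat.ceil_lt_add_one hy).le

lemma rpow_sub_rpow_sub_one_le_one {d x : ℝ} (hd0 : 0 ≤ d) (hd1 : d ≤ 1) (hx : 1 ≤ x) :
    x ^ d - (x - 1) ^ d ≤ 1 := by
  have := Real.rpow_add_le_add_rpow (sub_nonneg.mpr hx) zero_le_one hd0 hd1
  rw [sub_add_cancel, Real.one_rpow] at this
  linarith

lemma one_add_pow_le_exp_mul {a : ℝ} (ha : 0 ≤ a) (m : ℕ) : (1 + a) ^ m ≤ exp (a * m) := by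
  calc (1 + a) ^ m ≤ exp a ^ m := by gcongr; linarith [Real.add_one_le_exp a]
    _ = exp (a * m) := by rw [← Real.exp_nat_mul, mul_comm]

lemma summand_le {B a d y : ℝ} (N j : ℕ) (hB : 0 ≤ B) (ha : 0 ≤ a) (hd0 : 0 ≤ d) (hd1 : d ≤ 1)
    (hj1 : 1 ≤ (j : ℝ)) (hjy : (j : ℝ) < y) :
    (1 + exp (B * ((j : ℝ) ^ d - ((j : ℝ) - 1) ^ d))) * (1 + a) ^ (j + N)
      ≤ (1 + exp B) * exp (a * (y + N)) := by
  gcongr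
  · exact mul_le_of_le_one_right hB (rpow_sub_rpow_sub_one_le_one hd0 hd1 hj1)
  · calc (1 + a) ^ (j + N) ≤ exp (a * (j + N : ℕ)) := one_add_pow_le_exp_mul ha _
      _ ≤ exp (a * (y + N)) := by push_cast; gcongr

lemma tsum_summand_le {B a c d : ℝ} (N n : ℕ) (hB : 0 ≤ B) (ha : 0 ≤ a) (hc : 0 ≤ c)
    (hd0 : 0 ≤ d) (hd1 : d ≤ 1) (hn : 1 ≤ n) :
    ∑' j : ℕ, (if (n : ℝ) ^ c ≤ (j : ℝ) ∧ (j : ℝ) < ((n : ℝ) + 1) ^ c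
        then (1 + exp (B * ((j : ℝ) ^ d - ((j : ℝ) - 1) ^ d))) * (1 + a) ^ (j + N) else 0)
      ≤ (((n : ℝ) + 1) ^ c + 1) * ((1 + exp B) * exp (a * (((n : ℝ) + 1) ^ c + N))) := by
  have hn1 : (1 : ℝ) ≤ (n : ℝ) ^ c := Real.one_le_rpow (by exact_mod_cast hn) hc
  refine tsum_ite_le_mul (by positivity) (by positivity) (fun j hj => hj.2) fun j hj => ?_
  exact summand_le N j hB ha hd0 hd1 (hn1.trans hj.1) hj.2

lemma eventually_rpow_neg_mul_rpow_one_add_le (p : ℝ) {r : ℝ} (hr : 1 < r) :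
    ∀ᶠ n : ℕ in atTop, (n : ℝ) ^ (-p) * ((n : ℝ) + 1) ^ (1 + p) ≤ r * n := by
  have hlim : Tendsto (fun n : ℕ => (1 + 1 / (n : ℝ)) ^ (1 + p)) atTop (𝓝 1) := by
    simpa using ((tendsto_const_nhds.add tendsto_one_div_atTop_nhds_zero_nat).rpow_const
      (Or.inl (by norm_num)) : Tendsto (fun n : ℕ => (1 + 1 / (n : ℝ)) ^ (1 + p)) atTop _)
  filter_upwards [hlim.eventually_le_const hr, eventually_gt_atTop 0] with n hle hn
  have hn' : (0 : ℝ) < n := by exact_mod_cast hn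
  calc (n : ℝ) ^ (-p) * ((n : ℝ) + 1) ^ (1 + p) = (1 + 1 / (n : ℝ)) ^ (1 + p) * n := by
        rw [show 1 + 1 / (n : ℝ) = ((n : ℝ) + 1) / n by field_simp, Real.div_rpow (by positivity)
          hn'.le, Real.rpow_add hn', Real.rpow_neg hn'.le, Real.rpow_one]
        field_simp
    _ ≤ r * n := by gcongr

lemma isBigO_rpow_add_one_add_one_exp (c : ℝ) {b : ℝ} (hb : 0 < b) :
    (fun n : ℕ => ((n : ℝ) + 1) ^ c + 1) =O[atTop] fun n => exp (b * n) := by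
  have hshift : Tendsto (fun n : ℕ => (n : ℝ) + 1) atTop atTop :=
    tendsto_atTop_add_const_right _ 1 tendsto_natCast_atTop_atTop
  refine IsBigO.add ?_ ?_
  · refine ((isLittleO_rpow_exp_pos_mul_atTop c hb).comp_tendsto hshift).isBigO.trans ?_
    refine (isBigO_refl (fun n : ℕ => exp (b * n)) atTop).const_mul_left (exp b) |>.congr_left ?_
    intro n
    simp only [Function.comp_apply, ← Real.exp_add]
    ring_nf
  · refine IsBigO.of_bound 1 (Eventually.of_forall fun n => ?_)
    rw [norm_one, one_mul, Real.norm_of_nonneg (exp_nonneg _)]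
    exact Real.one_le_exp (by positivity)

lemma isBigO_rpow_add_one_add_one_mul_exp_neg (c : ℝ) {b₁ b₂ : ℝ} (hb : b₁ < b₂) :
    (fun n : ℕ => (((n : ℝ) + 1) ^ c + 1) * exp (-b₂ * n)) =O[atTop] fun n => exp (-b₁ * n) := by
  refine ((isBigO_rpow_add_one_add_one_exp c (sub_pos.mpr hb)).mul
    (isBigO_refl (fun n : ℕ => exp (-b₂ * n)) atTop)).congr_right fun n => ?_
  rw [← Real.exp_add]
  ring_nf

lemma eventually_mul_rpow_neg_mul_add_le {p B : ℝ} (hp : 0 ≤ p) (hB : 0 ≤ B) (N : ℕ) :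
    ∀ᶠ n : ℕ in atTop,
      B / 3 * (n : ℝ) ^ (-p) * (((n : ℝ) + 1) ^ (1 + p) + N) ≤ B / 2 * n + B * N / 3 := by
  filter_upwards [eventually_rpow_neg_mul_rpow_one_add_le p (by norm_num : (1 : ℝ) < 3 / 2),
    eventually_ge_atTop 1] with n hlt hn
  have hpow : (n : ℝ) ^ (-p) ≤ 1 :=
    Real.rpow_le_one_of_one_le_of_nonpos (by exact_mod_cast hn) (neg_nonpos.mpr hp)
  have hN : (n : ℝ) ^ (-p) * N ≤ N := mul_le_of_le_one_left (Nat.cast_nonneg N) hpow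
  nlinarith

theorem stmt14 (k B : ℝ) (hk : 0 < k) (hB : 0 < B) (N : ℕ) :
    (fun n : ℕ =>
        Real.exp (-B * n) *
          ∑' j : ℕ, (if (n : ℝ) ^ ((k + 1) / k) ≤ (j : ℝ) ∧
                (j : ℝ) < ((n : ℝ) + 1) ^ ((k + 1) / k)
              then (1 + Real.exp (B * ((j : ℝ) ^ (k / (k + 1)) - ((j : ℝ) - 1) ^ (k / (k + 1))))) *
                (1 + (B / 3) * (n : ℝ) ^ (-(1 : ℝ) / k)) ^ (j + N)
              else 0)) =O[atTop]
      (fun n : ℕ => Real.exp (-B * n / 4)) := by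
  have hc : (k + 1) / k = 1 + 1 / k := by field_simp
  have hd1 : k / (k + 1) ≤ 1 := div_le_one_of_le₀ (by linarith) (by positivity)
  simp only [hc, neg_div]
  refine IsBigO.trans ?_ ((isBigO_rpow_add_one_add_one_mul_exp_neg (1 + 1 / k)
    (by linarith : B / 4 < B / 2)).congr_right fun n => by ring_nf)
  refine IsBigO.of_bound ((1 + exp B) * exp (B * N / 3)) ?_
  filter_upwards [eventually_mul_rpow_neg_mul_add_le (p := 1 / k) (by positivity) hB.le N,
    eventually_ge_atTop 1] with n hexp hn
  have hS := tsum_summand_le (a := B / 3 * (n : ℝ) ^ (-(1 / k))) (c := 1 + 1 / k) N n hB.le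
    (by positivity) (by positivity) (by positivity) hd1 hn
  have hcancel :
      exp (-B * n) * exp (B / 2 * n + B * N / 3) = exp (B * N / 3) * exp (-(B / 2) * n) := by
    rw [← exp_add, ← exp_add]; ring_nf
  rw [norm_of_nonneg (by positivity), norm_of_nonneg (by positivity)]
  calc _ ≤ exp (-B * n) * ((((n : ℝ) + 1) ^ (1 + 1 / k) + 1) *
          ((1 + exp B) * exp (B / 2 * n + B * N / 3))) := by gcongr; exact hS.trans (by gcongr)
    _ = _ := by linear_combination ((((n : ℝ) + 1) ^ (1 + 1 / k) + 1) * (1 + exp B)) * hcancel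
end

section
/- Let m ≥ 2 be an integer and ε > 0. Define L_m(s₁,...,s_{m-1}) := (∏_{j=1}^{m-1} (s_j²+1)/(s_j²-1)) · Σ_{p=1}^{m-1} s_p^{m-1} · ∏_{j≠p} (s_j²+1)/|s_j² - s_p²| for 1 < s₁ < ... < s_{m-1}. Then with s_j := 1 + (j/m)·(ε/(2+ε)) for j = 1,...,m-1, one has L_m(s₁,...,s_{m-1}) ≤ (m-1)·(5m/2)^(2m-2)·(1 + 2/ε)^(2m-2). -/
open Real Finset

private lemma two_pow_le_fac (n : ℕ) : (2:ℝ)^n ≤ 2 * n.factorial := by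
  induction n with
  | zero => norm_num
  | succ k ih =>
    have h1 : (1:ℝ) ≤ (k.factorial : ℝ) := by exact_mod_cast k.factorial_pos
    rw [pow_succ, Nat.factorial_succ]
    push_cast
    rcases Nat.eq_zero_or_pos k with h | h
    · subst h; norm_num
    · have hk1 : (1:ℝ) ≤ (k:ℝ) := by exact_mod_cast h
      nlinarith

private lemma aux17 (n : ℕ) (hn : 1 ≤ n) (δ C : ℝ) (hδ0 : 0 < δ) (hδ1 : δ < 1)
    (hC : C = 5 * ((n:ℝ)+1) / (2*δ)) (s : ℕ → ℝ)
    (hs : ∀ j : ℕ, s j = 1 + (j:ℝ)/((n:ℝ)+1) * δ) :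
    (∏ j ∈ Finset.Icc 1 n, ((s j)^2+1)/((s j)^2-1)) *
      ∑ p ∈ Finset.Icc 1 n, (s p)^n *
        ∏ j ∈ (Finset.Icc 1 n).erase p, ((s j)^2+1)/|(s j)^2 - (s p)^2|
      ≤ (n:ℝ) * C^(2*n) := by
  have hn0 : (0:ℝ) < (n:ℝ)+1 := by positivity
  have hC0 : 0 < C := by rw [hC]; positivity
  have hC2 : 2 ≤ C := by
    rw [hC, le_div_iff₀ (by positivity)]
    have hn1 : (1:ℝ) ≤ (n:ℝ) := by exact_mod_cast hn
    nlinarith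
  have hcast : ∀ j ∈ Finset.Icc 1 n, (1:ℝ) ≤ (j:ℝ) ∧ (j:ℝ) ≤ (n:ℝ) := by
    intro j hj
    obtain ⟨h1, h2⟩ := Finset.mem_Icc.mp hj
    exact ⟨by exact_mod_cast h1, by exact_mod_cast h2⟩
  have hs1 : ∀ j ∈ Finset.Icc 1 n, 1 < s j := by
    intro j hj
    obtain ⟨h1, h2⟩ := hcast j hj
    rw [hs j]
    have hx : 0 < (j:ℝ)/((n:ℝ)+1) := div_pos (by linarith) hn0
    nlinarith [mul_pos hx hδ0]
  have hs2 : ∀ j ∈ Finset.Icc 1 n, s j ≤ 2 := by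
    intro j hj
    obtain ⟨h1, h2⟩ := hcast j hj
    rw [hs j]
    have hx : (j:ℝ)/((n:ℝ)+1) ≤ 1 := by rw [div_le_one hn0]; linarith
    have hx0 : 0 ≤ (j:ℝ)/((n:ℝ)+1) := by positivity
    nlinarith [mul_le_mul hx hδ1.le hδ0.le zero_le_one]
  have hnum5 : ∀ j ∈ Finset.Icc 1 n, (s j)^2 + 1 ≤ 5 := by
    intro j hj
    nlinarith [hs1 j hj, hs2 j hj]
  have hden1 : ∀ j ∈ Finset.Icc 1 n, 2*((j:ℝ)*δ/((n:ℝ)+1)) ≤ (s j)^2 - 1 := by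
    intro j hj
    obtain ⟨h1, h2⟩ := hcast j hj
    rw [hs j]
    have hx : 0 ≤ (j:ℝ)/((n:ℝ)+1)*δ :=
      mul_nonneg (div_nonneg (by linarith) hn0.le) hδ0.le
    have hexp : (1 + (j:ℝ)/((n:ℝ)+1)*δ)^2 - 1
        = 2*((j:ℝ)*δ/((n:ℝ)+1)) + ((j:ℝ)/((n:ℝ)+1)*δ)^2 := by ring
    rw [hexp]
    nlinarith [sq_nonneg ((j:ℝ)/((n:ℝ)+1)*δ)]
  have hdenpos : ∀ j ∈ Finset.Icc 1 n, 0 < (s j)^2 - 1 := by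
    intro j hj
    obtain ⟨h1, h2⟩ := hcast j hj
    have := hden1 j hj
    have hp : 0 < 2*((j:ℝ)*δ/((n:ℝ)+1)) :=
      mul_pos two_pos (div_pos (mul_pos (by linarith) hδ0) hn0)
    linarith
  -- Bound A
  have hA : ∀ j ∈ Finset.Icc 1 n, ((s j)^2+1)/((s j)^2-1) ≤ C/(j:ℝ) := by
    intro j hj
    obtain ⟨h1, h2⟩ := hcast j hj
    have hj0 : (0:ℝ) < (j:ℝ) := by linarith
    have hdp : 0 < 2*((j:ℝ)*δ/((n:ℝ)+1)) :=
      mul_pos two_pos (div_pos (mul_pos hj0 hδ0) hn0)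
    calc ((s j)^2+1)/((s j)^2-1) ≤ 5 / (2*((j:ℝ)*δ/((n:ℝ)+1))) :=
          div_le_div₀ (by norm_num) (hnum5 j hj) hdp (hden1 j hj)
      _ = C/(j:ℝ) := by
          rw [hC]; field_simp
  -- Bound B
  have hB : ∀ p ∈ Finset.Icc 1 n, ∀ j ∈ (Finset.Icc 1 n).erase p,
      ((s j)^2+1)/|(s j)^2-(s p)^2| ≤ C := by
    intro p hp j hj'
    obtain ⟨hjp, hj⟩ := Finset.mem_erase.mp hj'
    have hsum : 2 < s j + s p := by linarith [hs1 j hj, hs1 p hp]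
    have hdiff : s j - s p = ((j:ℝ)-(p:ℝ)) * (δ/((n:ℝ)+1)) := by
      rw [hs j, hs p]; ring
    have hone : (1:ℝ) ≤ |(j:ℝ)-(p:ℝ)| := by
      have hne : ((j:ℤ) - (p:ℤ)) ≠ 0 := sub_ne_zero.mpr (by exact_mod_cast hjp)
      have := Int.one_le_abs hne
      exact_mod_cast this
    have hq : 0 < δ/((n:ℝ)+1) := div_pos hδ0 hn0
    have habs : |(s j)^2 - (s p)^2| = (|(j:ℝ)-(p:ℝ)| * (δ/((n:ℝ)+1))) * (s j + s p) := by
      rw [show (s j)^2-(s p)^2 = (s j - s p)*(s j+s p) by ring, abs_mul, hdiff, abs_mul,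
        abs_of_pos hq, abs_of_pos (by linarith : (0:ℝ) < s j + s p)]
    have hlb : 2*(δ/((n:ℝ)+1)) ≤ |(s j)^2-(s p)^2| := by
      rw [habs]
      nlinarith [mul_nonneg (sub_nonneg.mpr hone) (by linarith : (0:ℝ) ≤ s j + s p - 2), hq,
        mul_pos hq (by linarith : (0:ℝ) < s j + s p)]
    calc ((s j)^2+1)/|(s j)^2-(s p)^2| ≤ 5 / (2*(δ/((n:ℝ)+1))) :=
          div_le_div₀ (by norm_num) (hnum5 j hj) (mul_pos two_pos hq) hlb
      _ = C := by rw [hC]; field_simp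
  -- assemble
  have hnonnegP : ∀ j ∈ Finset.Icc 1 n, 0 ≤ ((s j)^2+1)/((s j)^2-1) := fun j hj =>
    div_nonneg (by positivity) (hdenpos j hj).le
  have hP : (∏ j ∈ Finset.Icc 1 n, ((s j)^2+1)/((s j)^2-1)) ≤ ∏ j ∈ Finset.Icc 1 n, C/(j:ℝ) :=
    Finset.prod_le_prod hnonnegP hA
  have hF0 : (0:ℝ) < (n.factorial : ℝ) := by exact_mod_cast n.factorial_pos
  have hPval : (∏ j ∈ Finset.Icc 1 n, C/(j:ℝ)) = C^n / (n.factorial:ℝ) := by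
    rw [Finset.prod_div_distrib, Finset.prod_const, Nat.card_Icc, Nat.add_sub_cancel]
    congr 1
    rw [← Nat.cast_prod, ← Finset.Ico_add_one_right_eq_Icc, Finset.prod_Ico_id_eq_factorial n]
  have hprodnn : ∀ p : ℕ, 0 ≤ ∏ j ∈ (Finset.Icc 1 n).erase p, ((s j)^2+1)/|(s j)^2-(s p)^2| :=
    fun p => Finset.prod_nonneg (fun j _ => div_nonneg (by positivity) (abs_nonneg _))
  have hterm : ∀ p ∈ Finset.Icc 1 n,
      (s p)^n * ∏ j ∈ (Finset.Icc 1 n).erase p, ((s j)^2+1)/|(s j)^2-(s p)^2|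
        ≤ 2^n * C^(n-1) := by
    intro p hp
    have h1 : (s p)^n ≤ 2^n := pow_le_pow_left₀ (by linarith [hs1 p hp]) (hs2 p hp) n
    have h2 : (∏ j ∈ (Finset.Icc 1 n).erase p, ((s j)^2+1)/|(s j)^2-(s p)^2|) ≤ C^(n-1) := by
      calc (∏ j ∈ (Finset.Icc 1 n).erase p, ((s j)^2+1)/|(s j)^2-(s p)^2|)
          ≤ ∏ _j ∈ (Finset.Icc 1 n).erase p, C :=
            Finset.prod_le_prod (fun j _ => div_nonneg (by positivity) (abs_nonneg _)) (hB p hp)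
        _ = C^(n-1) := by
            rw [Finset.prod_const, Finset.card_erase_of_mem hp, Nat.card_Icc, Nat.add_sub_cancel]
    exact mul_le_mul h1 h2 (hprodnn p) (by positivity)
  have hS : (∑ p ∈ Finset.Icc 1 n, (s p)^n *
      ∏ j ∈ (Finset.Icc 1 n).erase p, ((s j)^2+1)/|(s j)^2-(s p)^2|)
        ≤ (n:ℝ) * (2^n * C^(n-1)) := by
    calc (∑ p ∈ Finset.Icc 1 n, (s p)^n *
        ∏ j ∈ (Finset.Icc 1 n).erase p, ((s j)^2+1)/|(s j)^2-(s p)^2|)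
        ≤ ∑ _p ∈ Finset.Icc 1 n, (2:ℝ)^n * C^(n-1) := Finset.sum_le_sum hterm
      _ = (n:ℝ) * (2^n * C^(n-1)) := by
          rw [Finset.sum_const, Nat.card_Icc, Nat.add_sub_cancel, nsmul_eq_mul]
  have hSnn : 0 ≤ ∑ p ∈ Finset.Icc 1 n, (s p)^n *
      ∏ j ∈ (Finset.Icc 1 n).erase p, ((s j)^2+1)/|(s j)^2-(s p)^2| :=
    Finset.sum_nonneg (fun p hp =>
      mul_nonneg (pow_nonneg (by linarith [hs1 p hp]) n) (hprodnn p))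
  have key : (2:ℝ)^n ≤ C * (n.factorial:ℝ) :=
    (two_pow_le_fac n).trans (by nlinarith)
  have hpow : C^n * C^(n-1) * C = C^(2*n) := by
    rw [← pow_add, ← pow_succ]
    congr 1
    omega
  calc (∏ j ∈ Finset.Icc 1 n, ((s j)^2+1)/((s j)^2-1)) *
      ∑ p ∈ Finset.Icc 1 n, (s p)^n *
        ∏ j ∈ (Finset.Icc 1 n).erase p, ((s j)^2+1)/|(s j)^2 - (s p)^2|
      ≤ (C^n / (n.factorial:ℝ)) * ((n:ℝ) * (2^n * C^(n-1))) :=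
        mul_le_mul (hP.trans_eq hPval) hS hSnn
          (div_nonneg (pow_nonneg hC0.le n) hF0.le)
    _ = ((2:ℝ)^n / (n.factorial:ℝ)) * ((n:ℝ) * (C^n * C^(n-1))) := by ring
    _ ≤ C * ((n:ℝ) * (C^n * C^(n-1))) := by
        apply mul_le_mul_of_nonneg_right _
          (mul_nonneg (Nat.cast_nonneg n)
            (mul_nonneg (pow_nonneg hC0.le n) (pow_nonneg hC0.le _)))
        rw [div_le_iff₀ hF0]
        linarith [key]
    _ = (n:ℝ) * (C^n * C^(n-1) * C) := by ring
    _ = (n:ℝ) * C^(2*n) := by rw [hpow]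

theorem stmt17 (m : ℕ) (hm : 2 ≤ m) (ε : ℝ) (hε : 0 < ε) :
    (∏ j ∈ Finset.Icc 1 (m - 1),
        (((1 + ((j : ℝ) / m) * (ε / (2 + ε))) ^ 2 + 1) / ((1 + ((j : ℝ) / m) * (ε / (2 + ε))) ^ 2 - 1))) *
      ∑ p ∈ Finset.Icc 1 (m - 1),
        (1 + ((p : ℝ) / m) * (ε / (2 + ε))) ^ (m - 1) *
          ∏ j ∈ (Finset.Icc 1 (m - 1)).erase p,
            (((1 + ((j : ℝ) / m) * (ε / (2 + ε))) ^ 2 + 1) /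
              |(1 + ((j : ℝ) / m) * (ε / (2 + ε))) ^ 2 - (1 + ((p : ℝ) / m) * (ε / (2 + ε))) ^ 2|) ≤
      ((m : ℝ) - 1) * (5 * m / 2) ^ (2 * m - 2) * (1 + 2 / ε) ^ (2 * m - 2) := by
  have h2ε : (0:ℝ) < 2 + ε := by linarith
  obtain ⟨n, rfl⟩ : ∃ n, m = n + 1 := ⟨m - 1, by omega⟩
  have hn : 1 ≤ n := by omega
  set δ := ε/(2+ε) with hδ
  have hδ0 : 0 < δ := div_pos hε h2ε
  have hδ1 : δ < 1 := (div_lt_one h2ε).2 (by linarith)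
  have hn0 : (0:ℝ) < (n:ℝ)+1 := by positivity
  have h1δ : 1 + 2/ε = 1/δ := by
    rw [hδ]; field_simp; ring
  simp only [Nat.add_sub_cancel, show 2*(n+1)-2 = 2*n from by omega]
  have hrhs : ((↑(n+1):ℝ) - 1) * (5*(↑(n+1):ℝ)/2)^(2*n) * (1+2/ε)^(2*n)
      = (n:ℝ) * (5*((n:ℝ)+1)/(2*δ))^(2*n) := by
    rw [mul_assoc, ← mul_pow, h1δ]
    push_cast
    rw [show (5*((n:ℝ)+1)/2) * (1/δ) = 5*((n:ℝ)+1)/(2*δ) by field_simp]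
    ring
  rw [hrhs]
  have := aux17 n hn δ (5*((n:ℝ)+1)/(2*δ)) hδ0 hδ1 rfl
    (fun j => 1 + (j:ℝ)/((n:ℝ)+1) * δ) (fun j => rfl)
  push_cast
  convert this using 2
end

section
/- Let k > 0 and P₀ ≥ 1, and for p ≥ 1 set r_p := ⌊e^(-1)·(1 + e·P₀)^(-k/(k+1))·p^(k/(k+1))⌋. Then there exist constants P₁, P₂ > 0 such that for all integers p ≥ 1: inf over n ∈ ℕ, n ≥ 1 of n^(n·(1+1/k))·((1 + e·P₀)/p)^n ≤ P₁·exp(-P₂·p^(k/(k+1))). -/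
open Real

theorem stmt18 (k P₀ : ℝ) (hk : 0 < k) (hP₀ : 1 ≤ P₀) :
    ∃ P₁ P₂ : ℝ, 0 < P₁ ∧ 0 < P₂ ∧ ∀ p : ℕ, 1 ≤ p →
      sInf {y : ℝ | ∃ n : ℕ, 1 ≤ n ∧
          y = (n : ℝ) ^ ((n : ℝ) * (1 + 1 / k)) * ((1 + Real.exp 1 * P₀) / p) ^ n} ≤
        P₁ * Real.exp (-P₂ * (p : ℝ) ^ (k / (k + 1))) := by
  set α := k / (k + 1) with hαdef
  have hα : 0 < α := div_pos hk (by linarith)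
  have hαinv : 1 + 1 / k = 1 / α := by
    rw [hαdef]; field_simp
  set C := 1 + Real.exp 1 * P₀ with hCdef
  have he : (0:ℝ) < Real.exp 1 := Real.exp_pos 1
  have hC : 1 < C := by nlinarith
  have hC0 : 0 < C := by linarith
  have hCα : 0 < C ^ α := Real.rpow_pos_of_pos hC0 α
  set P₂ := 1 / (2 * α * Real.exp 1 * C ^ α) with hP₂def
  have hP₂ : 0 < P₂ := by positivity
  set P₁ := C * Real.exp (1 / (2 * α)) with hP₁def
  have hP₁ : 0 < P₁ := by positivity
  have hP₁1 : 1 ≤ P₁ := by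
    have h1 : (1:ℝ) ≤ Real.exp (1 / (2 * α)) := Real.one_le_exp (by positivity)
    nlinarith
  refine ⟨P₁, P₂, hP₁, hP₂, ?_⟩
  intro p hp
  have hp0 : (0:ℝ) < p := by exact_mod_cast hp
  set m := (p : ℝ) ^ α / (Real.exp 1 * C ^ α) with hmdef
  have hm0 : 0 < m := by positivity
  have hkey : P₂ * (p : ℝ) ^ α = m / (2 * α) := by
    rw [hP₂def, hmdef, one_div_mul_eq_div, div_div]
    ring_nf
  have hbdd : BddBelow {y : ℝ | ∃ n : ℕ, 1 ≤ n ∧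
      y = (n : ℝ) ^ ((n : ℝ) * (1 + 1 / k)) * (C / p) ^ n} := by
    refine ⟨0, ?_⟩
    rintro y ⟨n, hn, rfl⟩
    positivity
  -- key estimate
  have hfn : ∀ n : ℕ, 1 ≤ n → (n : ℝ) ≤ m →
      (n : ℝ) ^ ((n : ℝ) * (1 + 1 / k)) * (C / p) ^ n ≤ Real.exp (-((n : ℝ) / α)) := by
    intro n hn1 hnm
    have hn0 : (0:ℝ) < n := by exact_mod_cast hn1
    have hCp : (0:ℝ) < C / p := by positivity
    have h1 : (n : ℝ) ^ ((n : ℝ) * (1 + 1 / k)) =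
        Real.exp (Real.log n * ((n : ℝ) * (1 / α))) := by
      rw [hαinv, Real.rpow_def_of_pos hn0]
    have h2 : (C / (p:ℝ)) ^ n = Real.exp ((n : ℝ) * Real.log (C / p)) := by
      rw [Real.exp_nat_mul, Real.exp_log hCp]
    rw [h1, h2, ← Real.exp_add]
    apply Real.exp_le_exp.mpr
    have hlogm : Real.log m = α * Real.log p - 1 - α * Real.log C := by
      rw [hmdef, Real.log_div (by positivity) (by positivity),
        Real.log_mul (Real.exp_ne_zero 1) (ne_of_gt hCα), Real.log_exp,
        Real.log_rpow hp0, Real.log_rpow hC0]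
      ring
    have h3 : Real.log n ≤ Real.log m := Real.log_le_log hn0 hnm
    have hlogn : Real.log n ≤ α * (Real.log p - Real.log C) - 1 := by linarith
    have hlogCp : Real.log (C / p) = Real.log C - Real.log p :=
      Real.log_div (ne_of_gt hC0) (ne_of_gt hp0)
    have hmul : Real.log n * ((n : ℝ) * (1 / α)) ≤
        (α * (Real.log p - Real.log C) - 1) * ((n : ℝ) * (1 / α)) :=
      mul_le_mul_of_nonneg_right hlogn (by positivity)
    have heq : (α * (Real.log p - Real.log C) - 1) * ((n : ℝ) * (1 / α)) =
        (n : ℝ) * (Real.log p - Real.log C) - (n : ℝ) / α := by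
      field_simp
    rw [hlogCp]
    nlinarith [hmul, heq]
  by_cases hm1 : 1 ≤ m
  · set n := ⌊m⌋₊ with hndef
    have hn1 : 1 ≤ n := Nat.le_floor (by exact_mod_cast hm1)
    have hnm : (n : ℝ) ≤ m := Nat.floor_le hm0.le
    have hn0 : (0:ℝ) < n := by exact_mod_cast hn1
    have hnhalf : m / 2 ≤ (n : ℝ) := by
      rcases le_or_gt m 2 with h | h
      · have : (1:ℝ) ≤ (n : ℝ) := by exact_mod_cast hn1
        linarith
      · have h4 := Nat.lt_floor_add_one m
        have : m < (n : ℝ) + 1 := by exact_mod_cast h4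
        linarith
    have hmem : (n : ℝ) ^ ((n : ℝ) * (1 + 1 / k)) * (C / p) ^ n ∈
        {y : ℝ | ∃ n : ℕ, 1 ≤ n ∧
          y = (n : ℝ) ^ ((n : ℝ) * (1 + 1 / k)) * (C / p) ^ n} := ⟨n, hn1, rfl⟩
    calc sInf {y : ℝ | ∃ n : ℕ, 1 ≤ n ∧
          y = (n : ℝ) ^ ((n : ℝ) * (1 + 1 / k)) * (C / p) ^ n}
        ≤ (n : ℝ) ^ ((n : ℝ) * (1 + 1 / k)) * (C / p) ^ n := csInf_le hbdd hmem
      _ ≤ Real.exp (-((n : ℝ) / α)) := hfn n hn1 hnm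
      _ ≤ Real.exp (-P₂ * (p : ℝ) ^ α) := by
          apply Real.exp_le_exp.mpr
          rw [neg_mul, hkey]
          have h5 : m / (2 * α) = (m / 2) / α := by ring
          have h6 : (m / 2) / α ≤ (n : ℝ) / α := by gcongr
          rw [h5] at *
          linarith [h6]
      _ ≤ P₁ * Real.exp (-P₂ * (p : ℝ) ^ α) :=
          le_mul_of_one_le_left (Real.exp_pos _).le hP₁1
  · push_neg at hm1
    have hmem : ((1:ℕ) : ℝ) ^ (((1:ℕ) : ℝ) * (1 + 1 / k)) * (C / p) ^ (1:ℕ) ∈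
        {y : ℝ | ∃ n : ℕ, 1 ≤ n ∧
          y = (n : ℝ) ^ ((n : ℝ) * (1 + 1 / k)) * (C / p) ^ n} := ⟨1, le_refl 1, rfl⟩
    have hstep : ((1:ℕ) : ℝ) ^ (((1:ℕ) : ℝ) * (1 + 1 / k)) * (C / p) ^ (1:ℕ) = C / p := by
      push_cast
      rw [Real.one_rpow, pow_one, one_mul]
    have hfin : C / p ≤ P₁ * Real.exp (-P₂ * (p : ℝ) ^ α) := by
      have h1 : P₂ * (p : ℝ) ^ α ≤ 1 / (2 * α) := by
        rw [hkey]
        gcongr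
      have h2 : Real.exp (-(1 / (2 * α))) ≤ Real.exp (-P₂ * (p : ℝ) ^ α) := by
        apply Real.exp_le_exp.mpr; rw [neg_mul]; linarith
      have h3 : C / (p:ℝ) ≤ C := by
        apply div_le_self hC0.le
        exact_mod_cast hp
      have h4 : C = P₁ * Real.exp (-(1 / (2 * α))) := by
        rw [hP₁def, mul_assoc, ← Real.exp_add]
        norm_num
      have h5 : P₁ * Real.exp (-(1 / (2 * α))) ≤ P₁ * Real.exp (-P₂ * (p : ℝ) ^ α) :=
        mul_le_mul_of_nonneg_left h2 hP₁.le
      linarith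
    calc sInf {y : ℝ | ∃ n : ℕ, 1 ≤ n ∧
          y = (n : ℝ) ^ ((n : ℝ) * (1 + 1 / k)) * (C / p) ^ n}
        ≤ ((1:ℕ) : ℝ) ^ (((1:ℕ) : ℝ) * (1 + 1 / k)) * (C / p) ^ (1:ℕ) := csInf_le hbdd hmem
      _ = C / p := hstep
      _ ≤ P₁ * Real.exp (-P₂ * (p : ℝ) ^ α) := hfin
end
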